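/- Let S be a random walk on a Cayley graph G of a finitely generated group, started at the identity o, such that almost surely lim inf_{t→∞} d_G(o, S_t)/t > 0. Let L_r = |{t ≥ 0 : S_t ∈ B(o,r)}|. Then there is a constant C < ∞ such that for all r ≥ 1, E[L_r] ≤ C · r. -/

import Mathlib

/-!
Positive speed gives an `n` such that, with probability more than `1/2`, `s ≤ n (|S_s| + n)` for
all `s`. Restart the walk at a visit to `B(o,r)` at time `t`: by the Markov property the restarted
path is independent of `S_t` and distributed like `S`, so with probability more than `1/2` it
stays outside `B(o,2r)` from time `K = n(2r+n)+1` on, and then the walk never returns to `B(o,r)`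
after time `t + K`. For a fixed trajectory all such "good" visits therefore lie in a window of
length `K`, whence `E[L_r] / 2 ≤ ∑_t P(the visit at t is good) ≤ K = O(r)`.
-/

open MeasureTheory ProbabilityTheory Filter Topology ENNReal

noncomputable section

variable {Γ : Type*} [Group Γ]

/-- The ball `B(o,r)` of radius `r` around the identity `o` in the word metric of the
(symmetrized) generating set `X` of a Cayley graph. -/
def wordBall (X : Set Γ) (r : ℝ) : Set Γ :=
  {g | ∃ l : List Γ, (∀ x ∈ l, x ∈ X ∨ x⁻¹ ∈ X) ∧ (l.length : ℝ) ≤ r ∧ l.prod = g}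

/-- The word norm `|g| = d_G(o, g)`, the graph distance from the identity to `g` in the
Cayley graph of `(Γ, X)`. -/
def wordNorm (X : Set Γ) (g : Γ) : ℕ := sInf {n : ℕ | g ∈ wordBall X n}

/-- `S` is a random walk on `Γ` started at the identity with i.i.d. increments of law `ν`:
each increment `S_t⁻¹ S_{t+1}` has law `ν`, and the increments are independent. -/
def IsRandomWalk {Ω : Type*} [MeasurableSpace Ω] [MeasurableSpace Γ]
    (P : Measure Ω) (S : ℕ → Ω → Γ) (ν : Γ → ℝ≥0∞) : Prop :=
  (∀ t, Measurable (S t)) ∧ (∀ ω, S 0 ω = 1) ∧ (∑' g : Γ, ν g = 1) ∧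
    (∀ t g, P {ω | (S t ω)⁻¹ * S (t + 1) ω = g} = ν g) ∧
    iIndepFun (fun t ω => (S t ω)⁻¹ * S (t + 1) ω) P

/-- The occupation time `L = |{t ≥ 0 : S_t ∈ B}|` of a set `B` by the trajectory `S · ω`. -/
def occupation (B : Set Γ) {Ω : Type*} (S : ℕ → Ω → Γ) (ω : Ω) : ℕ∞ :=
  {t : ℕ | S t ω ∈ B}.encard

section WordMetric

variable {X : Set Γ} {g h : Γ} {r r' : ℝ}

theorem inv_mem_wordBall (hg : g ∈ wordBall X r) : g⁻¹ ∈ wordBall X r := by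
  obtain ⟨l, hlX, hlr, rfl⟩ := hg
  refine ⟨(l.map (·⁻¹)).reverse, ?_, by simpa using hlr, by simp [List.prod_inv_reverse]⟩
  simp only [List.mem_reverse, List.mem_map]
  rintro _ ⟨x, hx, rfl⟩
  simpa [or_comm] using hlX x hx

theorem mul_mem_wordBall (hg : g ∈ wordBall X r) (hh : h ∈ wordBall X r') :
    g * h ∈ wordBall X (r + r') := by
  obtain ⟨l, hlX, hlr, rfl⟩ := hg
  obtain ⟨l', hlX', hlr', rfl⟩ := hh
  refine ⟨l ++ l', ?_, ?_, List.prod_append⟩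
  · simpa [or_imp, forall_and] using And.intro hlX hlX'
  · push_cast [List.length_append]
    linarith

theorem wordNorm_le_of_mem_wordBall (hg : g ∈ wordBall X r) : (wordNorm X g : ℝ) ≤ r := by
  obtain ⟨l, hlX, hlr, hl⟩ := hg
  have : wordNorm X g ≤ l.length := Nat.sInf_le ⟨l, hlX, le_rfl, hl⟩
  exact le_trans (by exact_mod_cast this) hlr

theorem mul_notMem_wordBall (hg : g ∈ wordBall X r) (hh : 2 * r < wordNorm X h) :
    g * h ∉ wordBall X r := fun hgh => by
  have := wordNorm_le_of_mem_wordBall (by simpa using mul_mem_wordBall (inv_mem_wordBall hg) hgh)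
  linarith

theorem countable_of_closure_eq_top (hX : X.Countable) (hXgen : Subgroup.closure X = ⊤) :
    Countable Γ := by
  have : Countable X := hX.to_subtype
  rw [FreeGroup.closure_eq_range, MonoidHom.range_eq_top] at hXgen
  exact hXgen.countable

end WordMetric

theorem Set.encard_le_of_forall_lt_add {T : Set ℕ} {K : ℕ} (hT : ∀ a ∈ T, ∀ b ∈ T, b < a + K) :
    T.encard ≤ K := by
  rcases T.eq_empty_or_nonempty with rfl | hne
  · simp
  have hsub : T ⊆ Finset.Ico (sInf T) (sInf T + K) := fun b hb => by
    simpa using ⟨Nat.sInf_le hb, hT _ (Nat.sInf_mem hne) b hb⟩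
  refine (Set.encard_mono hsub).trans_eq ?_
  rw [Set.encard_coe_eq_coe_finsetCard, Nat.card_Ico, Nat.add_sub_cancel_left]

theorem lintegral_encard_setOf_mem {Ω ι : Type*} [MeasurableSpace Ω] [Countable ι]
    {μ : Measure Ω} {E : ι → Set Ω} (hE : ∀ i, MeasurableSet (E i)) :
    ∫⁻ ω, ({i | ω ∈ E i}.encard : ℝ≥0∞) ∂μ = ∑' i, μ (E i) := by
  have hsum : ∀ ω, ({i | ω ∈ E i}.encard : ℝ≥0∞) = ∑' i, (E i).indicator 1 ω := fun ω => by
    rw [← ENNReal.tsum_set_one, tsum_subtype _ fun _ => (1 : ℝ≥0∞)]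
    rfl
  simp_rw [hsum]
  rw [lintegral_tsum fun i => (measurable_one.indicator (hE i)).aemeasurable]
  exact tsum_congr fun i => lintegral_indicator_one (hE i)

section Speed

theorem exists_forall_le_mul_add_of_liminf_pos {a : ℕ → ℝ} (ha : ∀ t, 0 ≤ a t)
    (hpos : 0 < liminf (fun t : ℕ => a t / t) atTop) :
    ∃ n : ℕ, ∀ s : ℕ, (s : ℝ) ≤ n * (a s + n) := by
  set L := liminf (fun t : ℕ => a t / t) atTop
  have hbdd : IsBoundedUnder (· ≥ ·) atTop (fun t : ℕ => a t / t) :=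
    isBoundedUnder_of ⟨0, fun t => div_nonneg (ha t) t.cast_nonneg⟩
  obtain ⟨T, hT⟩ := eventually_atTop.1 (eventually_lt_of_lt_liminf (half_lt_self hpos) hbdd)
  set n := max T ⌈2 / L⌉₊
  have hTn : (T : ℝ) ≤ n := by exact_mod_cast le_max_left _ _
  have hLn : 2 / L ≤ n := (Nat.le_ceil _).trans (by exact_mod_cast le_max_right _ _)
  refine ⟨n, fun s => ?_⟩
  have has := ha s
  rcases lt_or_ge s T with hs | hs
  · have : (s : ℝ) + 1 ≤ T := by exact_mod_cast hs
    nlinarith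
  rcases s.eq_zero_or_pos with rfl | hs0
  · simp only [CharP.cast_eq_zero]
    positivity
  have hspeed : L / 2 * s < a s := (lt_div_iff₀ (by exact_mod_cast hs0)).1 (hT s hs)
  calc (s : ℝ) = 2 / L * (L / 2 * s) := by field_simp
    _ ≤ n * a s := by gcongr
    _ ≤ n * (a s + n) := by nlinarith

variable {Ω : Type*} [MeasurableSpace Ω] {P : Measure Ω} [IsProbabilityMeasure P]

theorem exists_lt_measure_of_ae_exists_mem {G : ℕ → Set Ω} (hG : Monotone G)
    (hae : ∀ᵐ ω ∂P, ∃ n, ω ∈ G n) {c : ℝ≥0∞} (hc : c < 1) : ∃ n, c < P (G n) := by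
  have hunion : P (⋃ n, G n) = 1 := by
    refine (measure_congr (ae_eq_univ.2 ?_)).trans measure_univ
    convert ae_iff.1 hae using 2
    ext; simp
  rw [← hunion] at hc
  exact ((tendsto_measure_iUnion_atTop hG).eventually (lt_mem_nhds hc)).exists

theorem exists_lt_measure_forall_le_mul_add {a : ℕ → Ω → ℝ} (ha : ∀ t ω, 0 ≤ a t ω)
    (hpos : ∀ᵐ ω ∂P, 0 < liminf (fun t : ℕ => a t ω / t) atTop) {c : ℝ≥0∞} (hc : c < 1) :
    ∃ n : ℕ, c < P {ω | ∀ s : ℕ, (s : ℝ) ≤ n * (a s ω + n)} := by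
  refine exists_lt_measure_of_ae_exists_mem ?_
    (hpos.mono fun ω => exists_forall_le_mul_add_of_liminf_pos (ha · ω)) hc
  intro n m hnm ω hω s
  have : (n : ℝ) ≤ m := by exact_mod_cast hnm
  have := ha s ω
  exact (hω s).trans (by gcongr)

end Speed

section RandomWalk

variable {Ω : Type*} {S : ℕ → Ω → Γ}

def increment (S : ℕ → Ω → Γ) (t : ℕ) (ω : Ω) : Γ := (S t ω)⁻¹ * S (t + 1) ω

def restartPath (S : ℕ → Ω → Γ) (t : ℕ) (ω : Ω) (s : ℕ) : Γ := (S t ω)⁻¹ * S (t + s) ω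

def partialProd {M : Type*} [Monoid M] (u : ℕ → M) : ℕ → M
  | 0 => 1
  | s + 1 => partialProd u s * u s

theorem measurable_partialProd {M : Type*} [Monoid M] [MeasurableSpace M] [MeasurableMul₂ M] :
    Measurable (partialProd : (ℕ → M) → ℕ → M) := by
  refine measurable_pi_lambda _ fun s => ?_
  induction s with
  | zero => exact measurable_const
  | succ s ih => exact ih.mul (measurable_pi_apply s)

theorem restartPath_eq_partialProd (t : ℕ) :
    restartPath S t = partialProd ∘ fun ω i => increment S (t + i) ω := by
  funext ω s
  induction s with
  | zero => simp [restartPath, partialProd]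
  | succ s ih =>
    simp only [Function.comp_apply, partialProd] at ih ⊢
    rw [← ih]
    simp [restartPath, increment, mul_assoc, add_assoc]

variable [MeasurableSpace Γ] [MeasurableSpace Ω] {P : Measure Ω} {ν : Γ → ℝ≥0∞}

theorem IsRandomWalk.restartPath_zero (hwalk : IsRandomWalk P S ν) :
    restartPath S 0 = fun ω s => S s ω := by
  funext ω s
  simp [restartPath, hwalk.2.1 ω]

theorem IsRandomWalk.iIndepFun_increment (hwalk : IsRandomWalk P S ν) :
    iIndepFun (increment S) P :=
  hwalk.2.2.2.2

variable [MeasurableSingletonClass Γ] [Countable Γ]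

namespace IsRandomWalk

theorem measurable_increment (hwalk : IsRandomWalk P S ν) (t : ℕ) :
    Measurable (increment S t) :=
  (hwalk.1 t).inv.mul (hwalk.1 (t + 1))

theorem measurable_increments_from (hwalk : IsRandomWalk P S ν) (t : ℕ) :
    Measurable fun ω i => increment S (t + i) ω :=
  measurable_pi_lambda _ fun i => hwalk.measurable_increment (t + i)

theorem measurable_restartPath (hwalk : IsRandomWalk P S ν) (t : ℕ) :
    Measurable (restartPath S t) := by
  rw [restartPath_eq_partialProd]
  exact measurable_partialProd.comp (hwalk.measurable_increments_from t)

theorem map_increment (hwalk : IsRandomWalk P S ν) (t : ℕ) :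
    P.map (increment S t) = P.map (increment S 0) := by
  have hlaw : ∀ t g, P (increment S t ⁻¹' {g}) = ν g := hwalk.2.2.2.1
  refine Measure.ext_of_singleton fun g => ?_
  rw [Measure.map_apply (hwalk.measurable_increment t) (measurableSet_singleton g),
    Measure.map_apply (hwalk.measurable_increment 0) (measurableSet_singleton g)]
  exact (hlaw t g).trans (hlaw 0 g).symm

theorem map_restartPath (hwalk : IsRandomWalk P S ν) (t : ℕ) :
    P.map (restartPath S t) = P.map fun ω s => S s ω := by
  have hlaw : ∀ u, P.map (fun ω i => increment S (u + i) ω) =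
      Measure.infinitePi fun _ => P.map (increment S 0) := fun u => by
    rw [(hwalk.iIndepFun_increment.precomp (add_right_injective u)).map_fun_eq_infinitePi_map
      fun i => hwalk.measurable_increment (u + i)]
    simp_rw [hwalk.map_increment]
  rw [← hwalk.restartPath_zero, restartPath_eq_partialProd, restartPath_eq_partialProd,
    ← Measure.map_map measurable_partialProd (hwalk.measurable_increments_from t),
    ← Measure.map_map measurable_partialProd (hwalk.measurable_increments_from 0), hlaw, hlaw]

theorem indepFun_restartPath (hwalk : IsRandomWalk P S ν) (t : ℕ) :
    IndepFun (S t) (restartPath S t) P := by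
  let m : ℕ → MeasurableSpace Ω := fun i => MeasurableSpace.comap (increment S i) inferInstance
  have hpast_future : Indep (⨆ i ∈ Set.Iio t, m i) (⨆ i ∈ Set.Ici t, m i) P :=
    indep_iSup_of_disjoint (fun i => (hwalk.measurable_increment i).comap_le)
      hwalk.iIndepFun_increment (Set.Iio_disjoint_Ici le_rfl)
  have hpast : ∀ k ≤ t, Measurable[⨆ i ∈ Set.Iio t, m i] (S k) := by
    intro k hk
    induction k with
    | zero =>
      rw [show S 0 = fun _ => 1 from funext hwalk.2.1]
      exact measurable_const
    | succ k ih =>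
      have hstep : S (k + 1) = fun ω => S k ω * increment S k ω := by
        funext ω
        simp [increment]
      rw [hstep]
      exact (ih (by omega)).mul ((comap_measurable (increment S k)).mono
        (le_iSup₂ (f := fun i (_ : i ∈ Set.Iio t) => m i) k (by simpa using hk)) le_rfl)
  have hfuture : Measurable[⨆ i ∈ Set.Ici t, m i] (restartPath S t) := by
    rw [restartPath_eq_partialProd]
    refine measurable_partialProd.comp
      (@measurable_pi_lambda _ _ _ (⨆ i ∈ Set.Ici t, m i) _ _ fun i => ?_)
    exact (comap_measurable (increment S (t + i))).mono
      (le_iSup₂ (f := fun i (_ : i ∈ Set.Ici t) => m i) (t + i) (by simp)) le_rfl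
  rw [IndepFun_iff_Indep]
  exact indep_of_indep_of_le_right
    (indep_of_indep_of_le_left hpast_future (hpast t le_rfl).comap_le) hfuture.comap_le

theorem measure_inter_restartPath (hwalk : IsRandomWalk P S ν) (t : ℕ) (B : Set Γ)
    {A : Set (ℕ → Γ)} (hA : MeasurableSet A) :
    P (S t ⁻¹' B ∩ restartPath S t ⁻¹' A) = P (S t ⁻¹' B) * P ((fun ω s => S s ω) ⁻¹' A) := by
  rw [(hwalk.indepFun_restartPath t).measure_inter_preimage_eq_mul _ _ .of_discrete hA,
    ← Measure.map_apply (hwalk.measurable_restartPath t) hA, hwalk.map_restartPath,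
    Measure.map_apply (measurable_pi_lambda _ hwalk.1) hA]

theorem lintegral_occupation_mul_le [IsProbabilityMeasure P] (hwalk : IsRandomWalk P S ν)
    (B : Set Γ) {A : Set (ℕ → Γ)} (hA : MeasurableSet A) (K : ℕ)
    (hreturn : ∀ g ∈ B, ∀ p ∈ A, ∀ s, K ≤ s → g * p s ∉ B) :
    (∫⁻ ω, (occupation B S ω : ℝ≥0∞) ∂P) * P ((fun ω s => S s ω) ⁻¹' A) ≤ K := by
  set E : ℕ → Set Ω := fun t => S t ⁻¹' B ∩ restartPath S t ⁻¹' A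
  have hE : ∀ t, MeasurableSet (E t) :=
    fun t => (hwalk.1 t .of_discrete).inter (hwalk.measurable_restartPath t hA)
  have hwindow : ∀ ω, {t | ω ∈ E t}.encard ≤ K := fun ω =>
    Set.encard_le_of_forall_lt_add fun a ha b hb => by
      by_contra! hab
      refine hreturn _ ha.1 _ ha.2 (b - a) (by omega) ?_
      simpa [restartPath, Nat.add_sub_cancel' (by omega : a ≤ b)] using hb.1
  have hocc : ∫⁻ ω, (occupation B S ω : ℝ≥0∞) ∂P = ∑' t, P (S t ⁻¹' B) :=
    lintegral_encard_setOf_mem fun t => hwalk.1 t .of_discrete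
  calc (∫⁻ ω, (occupation B S ω : ℝ≥0∞) ∂P) * P ((fun ω s => S s ω) ⁻¹' A)
      = ∑' t, P (E t) := by
        simp only [hocc, ← ENNReal.tsum_mul_right, E, hwalk.measure_inter_restartPath _ _ hA]
    _ = ∫⁻ ω, ({t | ω ∈ E t}.encard : ℝ≥0∞) ∂P := (lintegral_encard_setOf_mem hE).symm
    _ ≤ ∫⁻ _, (K : ℝ≥0∞) ∂P :=
        lintegral_mono fun ω => by simpa using ENat.toENNReal_le.2 (hwindow ω)
    _ = K := by simp

end IsRandomWalk

end RandomWalk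

/-- **Linear occupation bound for walks with positive speed**
(Lyons–Peres–Sun–Zheng, Lemma 2.1).  If `S` is a random walk on a Cayley graph `G`
started at the identity `o` such that almost surely
`liminf_{t→∞} d_G(o, S_t)/t > 0`, then the occupation time `L_r = |{t ≥ 0 : S_t ∈ B(o,r)}|`
satisfies `E[L_r] ≤ C·r` for some constant `C < ∞` and all `r ≥ 1`. -/
theorem occupation_time_linear {Ω : Type*} [MeasurableSpace Ω] [MeasurableSpace Γ]
    [MeasurableSingletonClass Γ]
    (X : Finset Γ) (hXgen : Subgroup.closure (X : Set Γ) = ⊤)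
    (P : Measure Ω) [IsProbabilityMeasure P] (S : ℕ → Ω → Γ) (ν : Γ → ℝ≥0∞)
    (hwalk : IsRandomWalk P S ν)
    (hspeed : ∀ᵐ ω ∂P,
      0 < Filter.atTop.liminf (fun t : ℕ => (wordNorm (X : Set Γ) (S t ω) : ℝ) / t)) :
    ∃ C : ℝ, 0 < C ∧ ∀ r : ℕ, 1 ≤ r →
      ∫⁻ ω, (occupation (wordBall (X : Set Γ) r) S ω : ℝ≥0∞) ∂P ≤
        ENNReal.ofReal (C * r) := by
  have : Countable Γ := countable_of_closure_eq_top X.countable_toSet hXgen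
  obtain ⟨n, hn⟩ := exists_lt_measure_forall_le_mul_add (c := 2⁻¹)
    (fun _ _ => Nat.cast_nonneg _) hspeed (by norm_num)
  refine ⟨2 * n ^ 2 + 4 * n + 2, by positivity, fun r hr => ?_⟩
  set K := n * (2 * r + n) + 1
  set A : Set (ℕ → Γ) := {p | ∀ s, K ≤ s → 2 * (r : ℝ) < wordNorm X (p s)}
  have hescape : 2⁻¹ < P ((fun ω s => S s ω) ⁻¹' A) := by
    refine hn.trans_le (measure_mono fun ω hω s hs => ?_)
    have hK : ((n * (2 * r + n) + 1 : ℕ) : ℝ) ≤ s := by exact_mod_cast hs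
    push_cast at hK
    nlinarith [hω s, n.cast_nonneg (α := ℝ)]
  have hocc := (ENNReal.div_le_iff two_ne_zero ofNat_ne_top).1 <|
    (mul_le_mul_right hescape.le _).trans <| hwalk.lintegral_occupation_mul_le _
      (by measurability) K fun g hg p hp s hs => mul_notMem_wordBall hg (hp s hs)
  calc _ ≤ ((K * 2 : ℕ) : ℝ≥0∞) := mod_cast hocc
    _ = ENNReal.ofReal (K * 2 : ℕ) := (ENNReal.ofReal_natCast _).symm
    _ ≤ _ := ENNReal.ofReal_le_ofReal <| by
        have hr' : (1 : ℝ) ≤ r := mod_cast hr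
        push_cast [K]
        nlinarith

end
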